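/- Suppose K₁, K₂ ⊂ ℝ³ are oriented links and L ⊂ ℝ⁴ is a compact oriented surface with ∂L = ι_a(K₁) ∪ ι_b(K₂) (where ι_c(x₁,y₁,x₂) = (x₁,y₁,x₂,c)), such that ω|_{TL} ≡ 0 for the standard symplectic form ω on ℝ⁴. Then ∫_{π₁(K₁)} x₁ dy₁ = ∫_{π₁(K₂)} x₁ dy₁; in particular a Lagrangian cobordism between K₁ and K₂ forces a(K₁) = a(K₂) where a(K) = |∫_{π₁(K)} x₁ dy₁|. -/

import Mathlib

open MeasureTheory

namespace Stmt14Aux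

/-- Directional partial derivative. -/
noncomputable def pd (v : ℝ × ℝ) (f : ℝ × ℝ → ℝ) (p : ℝ × ℝ) : ℝ := fderiv ℝ f p v

lemma pd_contDiff {f : ℝ × ℝ → ℝ} (hf : ContDiff ℝ (⊤ : ℕ∞) f) (v : ℝ × ℝ) :
    ContDiff ℝ (⊤ : ℕ∞) (pd v f) :=
  (hf.fderiv_right (by simp)).clm_apply contDiff_const

lemma hasFDerivAt_pd {f : ℝ × ℝ → ℝ} (hf : ContDiff ℝ (⊤ : ℕ∞) f) (v : ℝ × ℝ) (p : ℝ × ℝ) :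
    HasFDerivAt (pd v f) ((fderiv ℝ (fderiv ℝ f) p).flip v) p := by
  have h1 : HasFDerivAt (fderiv ℝ f) (fderiv ℝ (fderiv ℝ f) p) p :=
    (((hf.fderiv_right (m := (⊤ : ℕ∞)) (by simp)).differentiable (by simp)) p).hasFDerivAt
  have h := h1.clm_apply (hasFDerivAt_const v p)
  show HasFDerivAt (fun y => fderiv ℝ f y v) _ p
  simpa using h

lemma pd_comm {f : ℝ × ℝ → ℝ} (hf : ContDiff ℝ (⊤ : ℕ∞) f) (v w p : ℝ × ℝ) :
    pd w (pd v f) p = pd v (pd w f) p := by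
  have h1 : HasFDerivAt (fderiv ℝ f) (fderiv ℝ (fderiv ℝ f) p) p :=
    (((hf.fderiv_right (m := (⊤ : ℕ∞)) (by simp)).differentiable (by simp)) p).hasFDerivAt
  have hs := second_derivative_symmetric
    (fun y => ((hf.differentiable (by simp)) y).hasFDerivAt) h1 w v
  show fderiv ℝ (pd v f) p w = fderiv ℝ (pd w f) p v
  rw [(hasFDerivAt_pd hf v p).fderiv, (hasFDerivAt_pd hf w p).fderiv]
  simpa using hs

lemma pd_mul {g h : ℝ × ℝ → ℝ} (hg : ContDiff ℝ (⊤ : ℕ∞) g) (hh : ContDiff ℝ (⊤ : ℕ∞) h)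
    (v p : ℝ × ℝ) :
    pd v (fun q => g q * h q) p = pd v g p * h p + g p * pd v h p := by
  show fderiv ℝ (fun q => g q * h q) p v = _
  rw [fderiv_fun_mul ((hg.differentiable (by simp)) p) ((hh.differentiable (by simp)) p)]
  simp only [ContinuousLinearMap.add_apply, ContinuousLinearMap.coe_smul',
    Pi.smul_apply, smul_eq_mul, pd]
  ring

lemma pd_add {g h : ℝ × ℝ → ℝ} (hg : ContDiff ℝ (⊤ : ℕ∞) g) (hh : ContDiff ℝ (⊤ : ℕ∞) h)
    (v p : ℝ × ℝ) :
    pd v (fun q => g q + h q) p = pd v g p + pd v h p := by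
  show fderiv ℝ (fun q => g q + h q) p v = _
  rw [fderiv_fun_add ((hg.differentiable (by simp)) p) ((hh.differentiable (by simp)) p)]
  rfl

/-- Invariance of `fderiv` under a translation-periodicity. -/
lemma fderiv_periodic {E : Type*} [NormedAddCommGroup E] [NormedSpace ℝ E]
    {G : ℝ × ℝ → E} (hG : Differentiable ℝ G)
    (hper : ∀ p : ℝ × ℝ, G (p + (1, 0)) = G p) (p : ℝ × ℝ) :
    fderiv ℝ G (p + (1, 0)) = fderiv ℝ G p := by
  have h1 : HasFDerivAt G (fderiv ℝ G (p + (1, 0))) (p + (1, 0)) := (hG _).hasFDerivAt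
  have h2 : HasFDerivAt (fun q => G (q + (1, 0))) (fderiv ℝ G (p + (1, 0))) p := by
    have := h1.comp p ((hasFDerivAt_id p).add_const (1, 0))
    simpa [Function.comp_def] using this
  have h3 : HasFDerivAt G (fderiv ℝ G (p + (1, 0))) p := by
    have : (fun q => G (q + (1, 0))) = G := funext hper
    rwa [this] at h2
  exact (h3.fderiv).symm ▸ rfl

lemma hasDerivAt_slice_t {f : ℝ × ℝ → ℝ} (hf : ContDiff ℝ (⊤ : ℕ∞) f) (θ t : ℝ) :
    HasDerivAt (fun s => f (θ, s)) (pd (0, 1) f (θ, t)) t := by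
  have hline : HasDerivAt (fun s : ℝ => ((θ, s) : ℝ × ℝ)) (((0 : ℝ), (1 : ℝ)) : ℝ × ℝ) t :=
    HasDerivAt.prodMk (hasDerivAt_const t θ) (hasDerivAt_id t)
  have h := (((hf.differentiable (by simp)) (θ, t)).hasFDerivAt).comp_hasDerivAt t hline
  simpa [pd, Function.comp_def] using h

lemma hasDerivAt_slice_theta {f : ℝ × ℝ → ℝ} (hf : ContDiff ℝ (⊤ : ℕ∞) f) (θ t : ℝ) :
    HasDerivAt (fun s => f (s, t)) (pd (1, 0) f (θ, t)) θ := by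
  have hline : HasDerivAt (fun s : ℝ => ((s, t) : ℝ × ℝ)) (((1 : ℝ), (0 : ℝ)) : ℝ × ℝ) θ :=
    HasDerivAt.prodMk (hasDerivAt_id θ) (hasDerivAt_const θ t)
  have h := (((hf.differentiable (by simp)) (θ, t)).hasFDerivAt).comp_hasDerivAt θ hline
  simpa [pd, Function.comp_def] using h

/-- The key pointwise identity: if the symplectic form vanishes on the pair of partial
derivatives, then `∂ₜ (x₁ ∂_θ y₁ + x₂ ∂_θ y₂) = ∂_θ (x₁ ∂ₜ y₁ + x₂ ∂ₜ y₂)`. -/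
lemma key {g1 g2 g3 g4 : ℝ × ℝ → ℝ} (h1 : ContDiff ℝ (⊤ : ℕ∞) g1) (h2 : ContDiff ℝ (⊤ : ℕ∞) g2)
    (h3 : ContDiff ℝ (⊤ : ℕ∞) g3) (h4 : ContDiff ℝ (⊤ : ℕ∞) g4) (p : ℝ × ℝ)
    (hω : pd (1, 0) g1 p * pd (0, 1) g2 p - pd (1, 0) g2 p * pd (0, 1) g1 p
        + pd (1, 0) g3 p * pd (0, 1) g4 p - pd (1, 0) g4 p * pd (0, 1) g3 p = 0) :
    pd (0, 1) (fun q => g1 q * pd (1, 0) g2 q + g3 q * pd (1, 0) g4 q) p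
      = pd (1, 0) (fun q => g1 q * pd (0, 1) g2 q + g3 q * pd (0, 1) g4 q) p := by
  have eL := pd_add (h1.mul (pd_contDiff h2 (1, 0))) (h3.mul (pd_contDiff h4 (1, 0))) (0, 1) p
  have eR := pd_add (h1.mul (pd_contDiff h2 (0, 1))) (h3.mul (pd_contDiff h4 (0, 1))) (1, 0) p
  have eL1 := pd_mul h1 (pd_contDiff h2 (1, 0)) (0, 1) p
  have eL2 := pd_mul h3 (pd_contDiff h4 (1, 0)) (0, 1) p
  have eR1 := pd_mul h1 (pd_contDiff h2 (0, 1)) (1, 0) p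
  have eR2 := pd_mul h3 (pd_contDiff h4 (0, 1)) (1, 0) p
  have c2 := pd_comm h2 (1, 0) (0, 1) p
  have c4 := pd_comm h4 (1, 0) (0, 1) p
  rw [eL, eL1, eL2, eR, eR1, eR2, c2, c4]
  linarith

end Stmt14Aux

open Stmt14Aux


/-- Standard symplectic form `dx₁∧dy₁ + dx₂∧dy₂` on `ℝ⁴ = ℝ×ℝ×ℝ×ℝ`. -/
noncomputable def omega4 (u v : ℝ × ℝ × ℝ × ℝ) : ℝ :=
  u.1 * v.2.1 - u.2.1 * v.1 + u.2.2.1 * v.2.2.2 - u.2.2.2 * v.2.2.1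

/-- Stokes: if `L` is a Lagrangian cobordism in `ℝ⁴` (here parametrized by
a smooth `1`-periodic-in-`θ` map `F : ℝ × [a,b] → ℝ⁴` on whose differential the standard
symplectic form vanishes), with `F(·,a) = ι_a(K₁)` and `F(·,b) = ι_b(K₂)` for oriented
links `K₁, K₂ ⊂ ℝ³`, then `∫_{π₁(K₁)} x₁ dy₁ = ∫_{π₁(K₂)} x₁ dy₁`; in particular a
Lagrangian cobordism forces `a(K₁) = a(K₂)`. -/
theorem stmt_14 (a b : ℝ) (hab : a < b)
    (γ₁ γ₂ : ℝ → ℝ × ℝ × ℝ)  -- parametrizations of K₁ and K₂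
    (hγ₁ : ContDiff ℝ (⊤ : ℕ∞) γ₁) (hγ₂ : ContDiff ℝ (⊤ : ℕ∞) γ₂)
    (hper₁ : ∀ θ, γ₁ (θ + 1) = γ₁ θ) (hper₂ : ∀ θ, γ₂ (θ + 1) = γ₂ θ)
    (F : ℝ × ℝ → ℝ × ℝ × ℝ × ℝ) (hF : ContDiff ℝ (⊤ : ℕ∞) F)
    (hFper : ∀ θ t, F (θ + 1, t) = F (θ, t))
    (hbot : ∀ θ, F (θ, a) = ((γ₁ θ).1, (γ₁ θ).2.1, (γ₁ θ).2.2, a))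
    (htop : ∀ θ, F (θ, b) = ((γ₂ θ).1, (γ₂ θ).2.1, (γ₂ θ).2.2, b))
    (hLag : ∀ p : ℝ × ℝ, p.2 ∈ Set.Icc a b →
      ∀ v w : ℝ × ℝ, omega4 (fderiv ℝ F p v) (fderiv ℝ F p w) = 0) :
    (∫ θ in (0:ℝ)..1, (γ₁ θ).1 * deriv (fun s => (γ₁ s).2.1) θ) =
      ∫ θ in (0:ℝ)..1, (γ₂ θ).1 * deriv (fun s => (γ₂ s).2.1) θ := by
  classical
  set g1 : ℝ × ℝ → ℝ := fun p => (F p).1 with hg1def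
  set g2 : ℝ × ℝ → ℝ := fun p => (F p).2.1 with hg2def
  set g3 : ℝ × ℝ → ℝ := fun p => (F p).2.2.1 with hg3def
  set g4 : ℝ × ℝ → ℝ := fun p => (F p).2.2.2 with hg4def
  have hg1 : ContDiff ℝ (⊤ : ℕ∞) g1 := contDiff_fst.comp hF
  have hg2 : ContDiff ℝ (⊤ : ℕ∞) g2 := contDiff_fst.comp (contDiff_snd.comp hF)
  have hg3 : ContDiff ℝ (⊤ : ℕ∞) g3 := contDiff_fst.comp (contDiff_snd.comp (contDiff_snd.comp hF))
  have hg4 : ContDiff ℝ (⊤ : ℕ∞) g4 := contDiff_snd.comp (contDiff_snd.comp (contDiff_snd.comp hF))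
  -- partial derivatives of components are components of fderiv F
  have hcomp : ∀ (p v : ℝ × ℝ),
      pd v g1 p = (fderiv ℝ F p v).1 ∧ pd v g2 p = (fderiv ℝ F p v).2.1 ∧
      pd v g3 p = (fderiv ℝ F p v).2.2.1 ∧ pd v g4 p = (fderiv ℝ F p v).2.2.2 := by
    intro p v
    have hFp : HasFDerivAt F (fderiv ℝ F p) p := ((hF.differentiable (by simp)) p).hasFDerivAt
    refine ⟨?_, ?_, ?_, ?_⟩
    · rw [pd, hg1def]; rw [hFp.fst.fderiv]; rfl
    · rw [pd, hg2def]; rw [hFp.snd.fst.fderiv]; rfl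
    · rw [pd, hg3def]; rw [hFp.snd.snd.fst.fderiv]; rfl
    · rw [pd, hg4def]; rw [hFp.snd.snd.snd.fderiv]; rfl
  set P : ℝ × ℝ → ℝ := fun q => g1 q * pd (1, 0) g2 q + g3 q * pd (1, 0) g4 q with hPdef
  set Q : ℝ × ℝ → ℝ := fun q => g1 q * pd (0, 1) g2 q + g3 q * pd (0, 1) g4 q with hQdef
  have hP : ContDiff ℝ (⊤ : ℕ∞) P := (hg1.mul (pd_contDiff hg2 (1, 0))).add (hg3.mul (pd_contDiff hg4 (1, 0)))
  have hQ : ContDiff ℝ (⊤ : ℕ∞) Q := (hg1.mul (pd_contDiff hg2 (0, 1))).add (hg3.mul (pd_contDiff hg4 (0, 1)))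
  -- the key identity on the strip
  have hkey : ∀ p : ℝ × ℝ, p.2 ∈ Set.Icc a b → pd (0, 1) P p = pd (1, 0) Q p := by
    intro p hp
    have hω0 := hLag p hp (1, 0) (0, 1)
    obtain ⟨e1, e2, e3, e4⟩ := hcomp p (1, 0)
    obtain ⟨f1, f2, f3, f4⟩ := hcomp p (0, 1)
    rw [hPdef, hQdef]
    refine key hg1 hg2 hg3 hg4 p ?_
    rw [e1, e2, e3, e4, f1, f2, f3, f4]
    simpa [omega4] using hω0
  -- periodicity of Q in θ
  have hQper : ∀ θ t : ℝ, Q (θ + 1, t) = Q (θ, t) := by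
    intro θ t
    have hper' : ∀ g : ℝ × ℝ → ℝ, ContDiff ℝ (⊤ : ℕ∞) g → (∀ p : ℝ × ℝ, g (p + (1, 0)) = g p) →
        g (θ + 1, t) = g (θ, t) ∧ ∀ v, pd v g (θ + 1, t) = pd v g (θ, t) := by
      intro g hg hper
      have h1 : ((θ, t) : ℝ × ℝ) + (1, 0) = (θ + 1, t) := by simp [Prod.ext_iff]
      constructor
      · rw [← h1]; exact hper (θ, t)
      · intro v
        have := fderiv_periodic (hg.differentiable (by simp)) hper (θ, t)
        rw [h1] at this
        simp only [pd, this]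
    have hFper' : ∀ (i : Fin 4), True := fun _ => trivial
    have p2 : ∀ p : ℝ × ℝ, g2 (p + (1, 0)) = g2 p := by
      intro p; rw [hg2def]
      show (F (p + (1,0))).2.1 = (F p).2.1
      have : (p + (1, 0) : ℝ × ℝ) = (p.1 + 1, p.2) := by simp [Prod.ext_iff]
      rw [this, hFper]
    have p1 : ∀ p : ℝ × ℝ, g1 (p + (1, 0)) = g1 p := by
      intro p; rw [hg1def]
      show (F (p + (1,0))).1 = (F p).1
      have : (p + (1, 0) : ℝ × ℝ) = (p.1 + 1, p.2) := by simp [Prod.ext_iff]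
      rw [this, hFper]
    have p3 : ∀ p : ℝ × ℝ, g3 (p + (1, 0)) = g3 p := by
      intro p; rw [hg3def]
      show (F (p + (1,0))).2.2.1 = (F p).2.2.1
      have : (p + (1, 0) : ℝ × ℝ) = (p.1 + 1, p.2) := by simp [Prod.ext_iff]
      rw [this, hFper]
    have p4 : ∀ p : ℝ × ℝ, g4 (p + (1, 0)) = g4 p := by
      intro p; rw [hg4def]
      show (F (p + (1,0))).2.2.2 = (F p).2.2.2
      have : (p + (1, 0) : ℝ × ℝ) = (p.1 + 1, p.2) := by simp [Prod.ext_iff]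
      rw [this, hFper]
    obtain ⟨q1, d1⟩ := hper' g1 hg1 p1
    obtain ⟨q2, d2⟩ := hper' g2 hg2 p2
    obtain ⟨q3, d3⟩ := hper' g3 hg3 p3
    obtain ⟨q4, d4⟩ := hper' g4 hg4 p4
    rw [hQdef]
    simp only [q1, q3, d2 (0,1), d4 (0,1)]
  -- FTC in t plus the key identity
  have step1 : ∀ θ : ℝ, P (θ, b) - P (θ, a) = ∫ t in a..b, pd (1, 0) Q (θ, t) := by
    intro θ
    have hderiv : ∀ t ∈ Set.uIcc a b, HasDerivAt (fun s => P (θ, s)) (pd (0, 1) P (θ, t)) t :=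
      fun t _ => hasDerivAt_slice_t hP θ t
    have hcont : Continuous fun t => pd (0, 1) P (θ, t) :=
      (pd_contDiff hP (0, 1)).continuous.comp (continuous_const.prodMk continuous_id)
    have h := intervalIntegral.integral_eq_sub_of_hasDerivAt hderiv
      (hcont.intervalIntegrable a b)
    rw [← h]
    refine intervalIntegral.integral_congr ?_
    intro t ht
    rw [Set.uIcc_of_le hab.le] at ht
    exact hkey (θ, t) ht
  -- FTC in θ plus periodicity: the inner integral vanishes
  have step2 : ∀ t : ℝ, (∫ θ in (0:ℝ)..1, pd (1, 0) Q (θ, t)) = 0 := by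
    intro t
    have hderiv : ∀ θ ∈ Set.uIcc (0:ℝ) 1, HasDerivAt (fun s => Q (s, t)) (pd (1, 0) Q (θ, t)) θ :=
      fun θ _ => hasDerivAt_slice_theta hQ θ t
    have hcont : Continuous fun θ => pd (1, 0) Q (θ, t) :=
      (pd_contDiff hQ (1, 0)).continuous.comp (continuous_id.prodMk continuous_const)
    rw [intervalIntegral.integral_eq_sub_of_hasDerivAt hderiv (hcont.intervalIntegrable 0 1)]
    have := hQper 0 t
    simp only [zero_add] at this
    rw [this, sub_self]
  -- Fubini
  have hQc : Continuous (pd (1, 0) Q) := (pd_contDiff hQ (1, 0)).continuous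
  have swap : (∫ θ in (0:ℝ)..1, ∫ t in a..b, pd (1, 0) Q (θ, t))
      = ∫ t in a..b, ∫ θ in (0:ℝ)..1, pd (1, 0) Q (θ, t) := by
    have hint : IntegrableOn (pd (1, 0) Q) (Set.Ioc (0:ℝ) 1 ×ˢ Set.Ioc a b) volume := by
      have hc : IntegrableOn (pd (1, 0) Q) (Set.Icc (0:ℝ) 1 ×ˢ Set.Icc a b) volume :=
        hQc.continuousOn.integrableOn_compact (isCompact_Icc.prod isCompact_Icc)
      exact hc.mono_set (Set.prod_mono Set.Ioc_subset_Icc_self Set.Ioc_subset_Icc_self)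
    simp only [intervalIntegral.integral_of_le hab.le,
      intervalIntegral.integral_of_le (zero_le_one : (0:ℝ) ≤ 1)]
    refine MeasureTheory.integral_integral_swap ?_
    rw [Measure.prod_restrict]
    have : Function.uncurry (fun θ t => pd (1, 0) Q (θ, t)) = pd (1, 0) Q := by
      funext p; simp [Function.uncurry]
    rw [this, ← Measure.volume_eq_prod]
    exact hint
  -- integrals of the boundary values
  have hPb : IntervalIntegrable (fun θ => P (θ, b)) volume 0 1 :=
    (hP.continuous.comp (continuous_id.prodMk continuous_const)).intervalIntegrable 0 1
  have hPa : IntervalIntegrable (fun θ => P (θ, a)) volume 0 1 :=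
    (hP.continuous.comp (continuous_id.prodMk continuous_const)).intervalIntegrable 0 1
  have main : (∫ θ in (0:ℝ)..1, P (θ, b)) = ∫ θ in (0:ℝ)..1, P (θ, a) := by
    have h1 : (∫ θ in (0:ℝ)..1, (P (θ, b) - P (θ, a)))
        = ∫ θ in (0:ℝ)..1, ∫ t in a..b, pd (1, 0) Q (θ, t) :=
      intervalIntegral.integral_congr fun θ _ => step1 θ
    rw [intervalIntegral.integral_sub hPb hPa] at h1
    rw [swap] at h1
    have h2 : (∫ t in a..b, ∫ θ in (0:ℝ)..1, pd (1, 0) Q (θ, t)) = 0 := by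
      rw [intervalIntegral.integral_congr (fun t _ => step2 t)]
      simp
    rw [h2] at h1
    linarith
  -- identify boundary values
  have hbotP : ∀ θ : ℝ, P (θ, a) = (γ₁ θ).1 * deriv (fun s => (γ₁ s).2.1) θ := by
    intro θ
    have e2 : pd (1, 0) g2 (θ, a) = deriv (fun s => (γ₁ s).2.1) θ := by
      have h := hasDerivAt_slice_theta hg2 θ a
      have hfun : (fun s => g2 (s, a)) = fun s => (γ₁ s).2.1 := by
        funext s; rw [hg2def]; show (F (s, a)).2.1 = _; rw [hbot]
      rw [hfun] at h
      exact (h.deriv).symm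
    have e4 : pd (1, 0) g4 (θ, a) = 0 := by
      have h := hasDerivAt_slice_theta hg4 θ a
      have hfun : (fun s => g4 (s, a)) = fun _ => a := by
        funext s; rw [hg4def]; show (F (s, a)).2.2.2 = _; rw [hbot]
      rw [hfun] at h
      exact h.unique (hasDerivAt_const θ a)
    have e1 : g1 (θ, a) = (γ₁ θ).1 := by rw [hg1def]; show (F (θ, a)).1 = _; rw [hbot]
    rw [hPdef]
    simp only [e1, e2, e4, mul_zero, add_zero]
  have htopP : ∀ θ : ℝ, P (θ, b) = (γ₂ θ).1 * deriv (fun s => (γ₂ s).2.1) θ := by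
    intro θ
    have e2 : pd (1, 0) g2 (θ, b) = deriv (fun s => (γ₂ s).2.1) θ := by
      have h := hasDerivAt_slice_theta hg2 θ b
      have hfun : (fun s => g2 (s, b)) = fun s => (γ₂ s).2.1 := by
        funext s; rw [hg2def]; show (F (s, b)).2.1 = _; rw [htop]
      rw [hfun] at h
      exact (h.deriv).symm
    have e4 : pd (1, 0) g4 (θ, b) = 0 := by
      have h := hasDerivAt_slice_theta hg4 θ b
      have hfun : (fun s => g4 (s, b)) = fun _ => b := by
        funext s; rw [hg4def]; show (F (s, b)).2.2.2 = _; rw [htop]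
      rw [hfun] at h
      exact h.unique (hasDerivAt_const θ b)
    have e1 : g1 (θ, b) = (γ₂ θ).1 := by rw [hg1def]; show (F (θ, b)).1 = _; rw [htop]
    rw [hPdef]
    simp only [e1, e2, e4, mul_zero, add_zero]
  calc (∫ θ in (0:ℝ)..1, (γ₁ θ).1 * deriv (fun s => (γ₁ s).2.1) θ)
      = ∫ θ in (0:ℝ)..1, P (θ, a) := intervalIntegral.integral_congr fun θ _ => (hbotP θ).symm
    _ = ∫ θ in (0:ℝ)..1, P (θ, b) := main.symm
    _ = ∫ θ in (0:ℝ)..1, (γ₂ θ).1 * deriv (fun s => (γ₂ s).2.1) θ :=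
        intervalIntegral.integral_congr fun θ _ => htopP θ
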